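/- Two-sided forgetting bound (conditional expectations given both endpoints): let S be a finite state space and fix strictly positive path weights w built from a transition matrix q with q(x,x') ≥ ε > 0 and positive observation weights. For any bounded function f on S × S with 0 < f ≤ ‖f‖_∞, any probability measures μ₁, μ₂ on S × S, and any 1 ≤ t ≤ n, |∑_{x,x'} E[f(X_{t-1},X_t) | Y_{0:n}, X_0 = x, X_n = x']·μ₁(x,x') − ∑_{x,x'} E[f(X_{t-1},X_t) | Y_{0:n}, X_0 = x, X_n = x']·μ₂(x,x')| ≤ (‖f‖_∞/ε)·(ρ^{t-1} + ρ^{n-t}), where ρ = 1 − ε. -/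

import Mathlib

/-!
Write `t = m + 1` and `n = m + 1 + k`. Cutting every path at the transition `t - 1 → t` turns
the conditional expectation given `X_0 = a`, `X_n = b` into the Bayes ratio
`J_{α,q,β}(f) = ∑ α(u) q(u,v) β(v) f(u,v) / ∑ α(u) q(u,v) β(v)`, with `α` the normalized
forward filter after `m` steps from `a` and `β` the normalized backward function over `k` steps
into `b`. Both are rows of products of matrices whose entries are comparable, within the factor
`ε`, to a positive rank-one matrix; each such factor is a Doeblin contraction of the `ℓ¹` distance
of normalized rows, so `‖α_a - α_a'‖₁ ≤ 2 (1 - ε)^m` and `‖β_b - β_b'‖₁ ≤ 2 (1 - ε)^k`. Centering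
`f` in `[0, C]` gives `|J_{α₁,q,β₁}(f) - J_{α₂,q,β₂}(f)| ≤ C/(2ε) (‖α₁ - α₂‖₁ + ‖β₁ - β₂‖₁)`.
Hence the conditional expectation varies by at most `(C/ε)((1 - ε)^m + (1 - ε)^k)` over the
endpoints, and that bounds its difference under any two laws of the endpoints.
-/

open Finset

/-- Weight of a state path `x_{0:n}` given the observations `y_{1:n}`,
without initial-law and time-0 observation factors. -/
noncomputable def hmmPathWeight {S Y : Type*} [Fintype S] (q : S → S → ℝ)
    (g : S → Y → ℝ) (y : ℕ → Y) (n : ℕ) (x : Fin (n + 1) → S) : ℝ :=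
  ∏ u : Fin n, (q (x u.castSucc) (x u.succ) * g (x u.succ) (y ((u : ℕ) + 1)))

/-- Conditional expectation of `f(X_{t-1}, X_t)` given the observations and both
endpoints `X_0 = a`, `X_n = b`, as a ratio of sums of path weights. -/
noncomputable def hmmCondExp {S Y : Type*} [Fintype S] [DecidableEq S] (q : S → S → ℝ)
    (g : S → Y → ℝ) (y : ℕ → Y) (f : S → S → ℝ) (n t : ℕ)
    (h1 : 1 ≤ t) (h2 : t ≤ n) (a b : S) : ℝ :=
  (∑ p : Fin (n + 1) → S,
      if p 0 = a ∧ p (Fin.last n) = b then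
        hmmPathWeight q g y n p * f (p ⟨t - 1, by omega⟩) (p ⟨t, by omega⟩)
      else 0) /
    (∑ p : Fin (n + 1) → S,
      if p 0 = a ∧ p (Fin.last n) = b then hmmPathWeight q g y n p else 0)

open Matrix

section Vectors
variable {ι : Type*} [Fintype ι]

theorem le_dotProduct_of_mem_stdSimplex {β φ : ι → ℝ} {a : ℝ} (hβ : β ∈ stdSimplex ℝ ι)
    (h : ∀ i, a ≤ φ i) : a ≤ β ⬝ᵥ φ := by
  calc a = ∑ i, β i * a := by rw [← sum_mul, hβ.2, one_mul]
    _ ≤ β ⬝ᵥ φ := sum_le_sum fun i _ => mul_le_mul_of_nonneg_left (h i) (hβ.1 i)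

theorem dotProduct_le_of_mem_stdSimplex {β φ : ι → ℝ} {a : ℝ} (hβ : β ∈ stdSimplex ℝ ι)
    (h : ∀ i, φ i ≤ a) : β ⬝ᵥ φ ≤ a := by
  calc β ⬝ᵥ φ ≤ ∑ i, β i * a := sum_le_sum fun i _ => mul_le_mul_of_nonneg_left (h i) (hβ.1 i)
    _ = a := by rw [← sum_mul, hβ.2, one_mul]

theorem abs_dotProduct_le_of_sum_eq_zero {Δ φ : ι → ℝ} {c r : ℝ} (hΔ : ∑ i, Δ i = 0)
    (hφ : ∀ i, |φ i - c| ≤ r) : |Δ ⬝ᵥ φ| ≤ r * ∑ i, |Δ i| := by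
  have hshift : Δ ⬝ᵥ φ = ∑ i, Δ i * (φ i - c) := by
    simp only [mul_sub, sum_sub_distrib, ← sum_mul, hΔ, zero_mul, sub_zero, dotProduct]
  rw [hshift, mul_sum]
  refine (abs_sum_le_sum_abs _ _).trans (sum_le_sum fun i _ => ?_)
  rw [abs_mul, mul_comm r]
  exact mul_le_mul_of_nonneg_left (hφ i) (abs_nonneg _)

theorem abs_sum_mul_sub_sum_mul_le {μ₁ μ₂ φ : ι → ℝ} {D : ℝ} (hμ₁ : μ₁ ∈ stdSimplex ℝ ι)
    (hμ₂ : μ₂ ∈ stdSimplex ℝ ι) (hφ : ∀ i j, |φ i - φ j| ≤ D) :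
    |∑ i, φ i * μ₁ i - ∑ j, φ j * μ₂ j| ≤ D := by
  have hcouple : ∑ i, φ i * μ₁ i - ∑ j, φ j * μ₂ j = ∑ i, ∑ j, μ₁ i * μ₂ j * (φ i - φ j) := by
    simp only [mul_sub, sum_sub_distrib]
    congr 1
    · refine sum_congr rfl fun i _ => ?_
      rw [← sum_mul, ← mul_sum, hμ₂.2]
      ring
    · rw [sum_comm]
      refine sum_congr rfl fun j _ => ?_
      rw [← sum_mul, ← sum_mul, hμ₁.2]
      ring
  rw [hcouple]
  calc _ ≤ ∑ i, ∑ j, μ₁ i * μ₂ j * D := by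
        refine (abs_sum_le_sum_abs _ _).trans (sum_le_sum fun i _ => ?_)
        refine (abs_sum_le_sum_abs _ _).trans (sum_le_sum fun j _ => ?_)
        rw [abs_mul, abs_of_nonneg (mul_nonneg (hμ₁.1 i) (hμ₂.1 j))]
        exact mul_le_mul_of_nonneg_left (hφ i j) (mul_nonneg (hμ₁.1 i) (hμ₂.1 j))
    _ = D := by simp only [← sum_mul, ← mul_sum, hμ₁.2, hμ₂.2, one_mul]

theorem sum_abs_vecMul_le {Δ : ι → ℝ} {R : Matrix ι ι ℝ} {s : ℝ} (hR : ∀ a v, 0 ≤ R a v)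
    (hrow : ∀ a, ∑ v, R a v = s) : ∑ v, |(Δ ᵥ* R) v| ≤ s * ∑ a, |Δ a| := by
  calc ∑ v, |(Δ ᵥ* R) v| ≤ ∑ v, ∑ a, |Δ a| * R a v := by
        refine sum_le_sum fun v _ => (abs_sum_le_sum_abs _ _).trans_eq ?_
        simp only [abs_mul, abs_of_nonneg (hR _ v)]
    _ = s * ∑ a, |Δ a| := by
        rw [sum_comm]
        simp only [← mul_sum, hrow, ← sum_mul]
        ring

theorem sum_abs_vecMul_le_of_minorant {Δ : ι → ℝ} {R : Matrix ι ι ℝ} {ν : ι → ℝ} {ε : ℝ}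
    (hΔ : ∑ a, Δ a = 0) (hrow : ∀ a, ∑ v, R a v = 1) (hν : ∑ v, ν v = 1)
    (hmin : ∀ a v, ε * ν v ≤ R a v) : ∑ v, |(Δ ᵥ* R) v| ≤ (1 - ε) * ∑ a, |Δ a| := by
  have hresidual : Δ ᵥ* R = Δ ᵥ* (R - of fun _ v => ε * ν v) := by
    ext v
    simp only [vecMul, dotProduct, Matrix.sub_apply, of_apply, mul_sub, sum_sub_distrib,
      ← sum_mul, hΔ, zero_mul, sub_zero]
  rw [hresidual]
  refine sum_abs_vecMul_le (fun a v => ?_) fun a => ?_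
  · simpa using hmin a v
  · simp only [Matrix.sub_apply, of_apply, sum_sub_distrib, hrow, ← mul_sum, hν, mul_one]

end Vectors

section Mixing
variable {S : Type*}

/-- Unlike a lower bound on a stochastic matrix, this condition survives transposition and the
rescaling of rows and columns, which is what the backward functions need. -/
def IsMixing (ε : ℝ) (M : Matrix S S ℝ) : Prop :=
  ∃ r c : S → ℝ, (∀ u, 0 < r u) ∧ (∀ v, 0 < c v) ∧
    ∀ u v, ε * (r u * c v) ≤ M u v ∧ M u v ≤ r u * c v

variable {ε : ℝ} {M : Matrix S S ℝ}

theorem isMixing_of_le (hlo : ∀ u v, ε ≤ M u v) (hhi : ∀ u v, M u v ≤ 1) : IsMixing ε M :=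
  ⟨1, 1, fun _ => one_pos, fun _ => one_pos, fun u v => by simpa using ⟨hlo u v, hhi u v⟩⟩

theorem IsMixing.transpose (hM : IsMixing ε M) : IsMixing ε Mᵀ := by
  obtain ⟨r, c, hr, hc, hb⟩ := hM
  exact ⟨c, r, hc, hr, fun u v => by simpa only [transpose_apply, mul_comm (c u)] using hb v u⟩

theorem IsMixing.pos (hε : 0 < ε) (hM : IsMixing ε M) (u v : S) : 0 < M u v := by
  obtain ⟨r, c, hr, hc, hb⟩ := hM
  exact (mul_pos hε (mul_pos (hr u) (hc v))).trans_le (hb u v).1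

variable [Fintype S]

theorem IsMixing.mul_diagonal [DecidableEq S] (hM : IsMixing ε M) {T : S → ℝ} (hT : ∀ v, 0 < T v) :
    IsMixing ε (M * diagonal T) := by
  obtain ⟨r, c, hr, hc, hb⟩ := hM
  refine ⟨r, c * T, hr, fun v => mul_pos (hc v) (hT v), fun u v => ?_⟩
  rw [Matrix.mul_diagonal, Pi.mul_apply]
  constructor
  · calc ε * (r u * (c v * T v)) = ε * (r u * c v) * T v := by ring
      _ ≤ M u v * T v := mul_le_mul_of_nonneg_right (hb u v).1 (hT v).le
  · calc M u v * T v ≤ r u * c v * T v := mul_le_mul_of_nonneg_right (hb u v).2 (hT v).le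
      _ = r u * (c v * T v) := by ring

def RowPositive (P : Matrix S S ℝ) : Prop := (∀ a u, 0 ≤ P a u) ∧ ∀ a, 0 < ∑ u, P a u

theorem rowPositive_diagonal [DecidableEq S] {c : S → ℝ} (hc : ∀ v, 0 < c v) :
    RowPositive (diagonal c) :=
  ⟨fun a u => by by_cases h : a = u <;> simp [h, (hc u).le],
    fun a => by simpa [diagonal_apply] using hc a⟩

theorem rowPositive_one [DecidableEq S] : RowPositive (1 : Matrix S S ℝ) := by
  simpa using rowPositive_diagonal fun _ : S => one_pos

noncomputable def rowNormalize (P : Matrix S S ℝ) : Matrix S S ℝ := of fun a u => P a u / ∑ w, P a w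

theorem rowNormalize_apply_eq_smul (P : Matrix S S ℝ) (a : S) :
    rowNormalize P a = (∑ w, P a w)⁻¹ • P a := by
  ext u
  simp [rowNormalize, div_eq_inv_mul]

theorem sum_rowNormalize {P : Matrix S S ℝ} {a : S} (h : ∑ w, P a w ≠ 0) :
    ∑ u, rowNormalize P a u = 1 := by
  simp only [rowNormalize, of_apply, ← sum_div, div_self h]

theorem RowPositive.rowNormalize_mem_stdSimplex {P : Matrix S S ℝ} (hP : RowPositive P) (a : S) :
    rowNormalize P a ∈ stdSimplex ℝ S :=
  ⟨fun u => div_nonneg (hP.1 a u) (hP.2 a).le, sum_rowNormalize (hP.2 a).ne'⟩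

theorem rowNormalize_mul [DecidableEq S] (M P : Matrix S S ℝ) (hP : ∀ v, ∑ u, P v u ≠ 0) :
    rowNormalize (M * P)
      = rowNormalize (M * diagonal fun v => ∑ u, P v u) * rowNormalize P := by
  have hrow : ∀ a, ∑ u, (M * P) a u = ∑ v, (M * diagonal fun v => ∑ u, P v u) a v := by
    intro a
    simp_rw [Matrix.mul_diagonal, mul_apply, mul_sum]
    exact sum_comm
  ext a u
  rw [mul_apply]
  simp_rw [rowNormalize, of_apply, hrow, Matrix.mul_diagonal, mul_apply]
  rw [sum_div]
  refine sum_congr rfl fun v _ => ?_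
  field_simp [hP v]

theorem IsMixing.exists_minorant [Nonempty S] (hε : 0 < ε) (hM : IsMixing ε M) :
    ∃ ν : S → ℝ, ∑ v, ν v = 1 ∧ ∀ a v, ε * ν v ≤ rowNormalize M a v := by
  have hpos := hM.pos hε
  have hrow : ∀ a, 0 < ∑ w, M a w := fun a => sum_pos (fun w _ => hpos a w) univ_nonempty
  obtain ⟨r, c, hr, hc, hb⟩ := hM
  have hcsum : 0 < ∑ v, c v := sum_pos (fun v _ => hc v) univ_nonempty
  refine ⟨fun v => c v / ∑ w, c w, by rw [← sum_div, div_self hcsum.ne'], fun a v => ?_⟩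
  have hrow_le : ∑ w, M a w ≤ r a * ∑ w, c w := by
    rw [mul_sum]; exact sum_le_sum fun w _ => (hb a w).2
  have hra := hr a
  calc ε * (c v / ∑ w, c w) = ε * (r a * c v) / (r a * ∑ w, c w) := by field_simp
    _ ≤ M a v / (r a * ∑ w, c w) := div_le_div_of_nonneg_right (hb a v).1 (by positivity)
    _ ≤ rowNormalize M a v :=
      div_le_div_of_nonneg_left (hpos a v).le (hrow a) hrow_le

theorem IsMixing.rowPositive_mul (hε : 0 < ε) (hM : IsMixing ε M) {P : Matrix S S ℝ}
    (hP : RowPositive P) : RowPositive (M * P) := by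
  refine ⟨fun a u => sum_nonneg fun v _ => mul_nonneg (hM.pos hε a v).le (hP.1 v u), fun a => ?_⟩
  simp_rw [mul_apply]
  rw [sum_comm]
  simp_rw [← mul_sum]
  exact sum_pos (fun v _ => mul_pos (hM.pos hε a v) (hP.2 v)) ⟨a, mem_univ a⟩

theorem sum_vecMul_eq_zero {Δ : S → ℝ} {R : Matrix S S ℝ} (hΔ : ∑ a, Δ a = 0)
    (hrow : ∀ a, ∑ v, R a v = 1) : ∑ v, (Δ ᵥ* R) v = 0 := by
  simp only [vecMul, dotProduct]
  rw [sum_comm]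
  simp only [← mul_sum, hrow, mul_one, hΔ]

variable [DecidableEq S]

theorem RowPositive.list_prod_mul (hε : 0 < ε) {Ms : List (Matrix S S ℝ)}
    (hMs : ∀ M ∈ Ms, IsMixing ε M) {N : Matrix S S ℝ} (hN : RowPositive N) :
    RowPositive (Ms.prod * N) := by
  induction Ms with
  | nil => simpa using hN
  | cons M Ms ih =>
    rw [List.prod_cons, Matrix.mul_assoc]
    exact (hMs M List.mem_cons_self).rowPositive_mul hε
      (ih fun M' hM' => hMs M' (List.mem_cons_of_mem M hM'))

variable [Nonempty S]

/-- Induction on the first factor: by `rowNormalize_mul`, the normalized rows of `M * P` are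
mixtures of those of `P` under a stochastic kernel that inherits the minorization of `M`. -/
theorem sum_abs_vecMul_rowNormalize_le (hε : 0 < ε) (hε1 : ε ≤ 1) {Ms : List (Matrix S S ℝ)}
    (hMs : ∀ M ∈ Ms, IsMixing ε M) {N : Matrix S S ℝ} (hN : RowPositive N) {Δ : S → ℝ}
    (hΔ : ∑ a, Δ a = 0) :
    ∑ u, |(Δ ᵥ* rowNormalize (Ms.prod * N)) u| ≤ (1 - ε) ^ Ms.length * ∑ a, |Δ a| := by
  induction Ms generalizing Δ with
  | nil =>
    rw [List.prod_nil, Matrix.one_mul, List.length_nil, pow_zero]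
    exact sum_abs_vecMul_le (fun a u => (hN.rowNormalize_mem_stdSimplex a).1 u)
      (fun a => (hN.rowNormalize_mem_stdSimplex a).2)
  | cons M Ms ih =>
    have hMs' : ∀ M' ∈ Ms, IsMixing ε M' := fun M' hM' => hMs M' (List.mem_cons_of_mem M hM')
    have hP := RowPositive.list_prod_mul hε hMs' hN
    have hMT := (hMs M List.mem_cons_self).mul_diagonal hP.2
    set R := rowNormalize (M * diagonal fun v => ∑ u, (Ms.prod * N) v u)
    have hRrow : ∀ a, ∑ v, R a v = 1 := fun a =>
      sum_rowNormalize (sum_pos (fun v _ => hMT.pos hε a v) univ_nonempty).ne'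
    obtain ⟨ν, hν, hmin⟩ := hMT.exists_minorant hε
    rw [List.prod_cons, Matrix.mul_assoc, rowNormalize_mul _ _ fun v => (hP.2 v).ne',
      ← vecMul_vecMul, List.length_cons, pow_succ, mul_assoc]
    calc _ ≤ (1 - ε) ^ Ms.length * ∑ v, |(Δ ᵥ* R) v| := ih hMs' (sum_vecMul_eq_zero hΔ hRrow)
      _ ≤ (1 - ε) ^ Ms.length * ((1 - ε) * ∑ a, |Δ a|) :=
        mul_le_mul_of_nonneg_left (sum_abs_vecMul_le_of_minorant hΔ hRrow hν hmin)
          (pow_nonneg (sub_nonneg.2 hε1) _)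

theorem sum_abs_rowNormalize_sub_le (hε : 0 < ε) (hε1 : ε ≤ 1) {Ms : List (Matrix S S ℝ)}
    (hMs : ∀ M ∈ Ms, IsMixing ε M) {N : Matrix S S ℝ} (hN : RowPositive N) (a a' : S) :
    ∑ u, |rowNormalize (Ms.prod * N) a u - rowNormalize (Ms.prod * N) a' u|
      ≤ 2 * (1 - ε) ^ Ms.length := by
  set Δ : S → ℝ := Pi.single a 1 - Pi.single a' 1
  have hΔ : ∑ s, Δ s = 0 := by simp [Δ, sum_sub_distrib]
  have hsingle : ∀ b : S, ∑ s, |Pi.single b (1 : ℝ) s| = 1 := fun b => by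
    rw [sum_eq_single b (fun s _ hs => by simp [hs]) (by simp)]
    simp
  have hΔ2 : ∑ s, |Δ s| ≤ 2 := by
    calc ∑ s, |Δ s| ≤ ∑ s, (|Pi.single a (1 : ℝ) s| + |Pi.single a' (1 : ℝ) s|) :=
          sum_le_sum fun s _ => abs_sub _ _
      _ = 2 := by rw [sum_add_distrib, hsingle, hsingle]; norm_num
  have hvec : Δ ᵥ* rowNormalize (Ms.prod * N)
      = rowNormalize (Ms.prod * N) a - rowNormalize (Ms.prod * N) a' := by
    simp [Δ, sub_vecMul, single_vecMul, row_def]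
  rw [mul_comm]
  calc _ = ∑ u, |(Δ ᵥ* rowNormalize (Ms.prod * N)) u| := by rw [hvec]; rfl
    _ ≤ _ := (sum_abs_vecMul_rowNormalize_le hε hε1 hMs hN hΔ).trans
        (mul_le_mul_of_nonneg_left hΔ2 (pow_nonneg (sub_nonneg.2 hε1) _))

end Mixing

section SmoothedMean
variable {S : Type*} [Fintype S]

/-- The paper's `J_{α,q,β}(f)`: the mean of `f` under the law on `S × S` proportional to
`α u * q u v * β v`. -/
noncomputable def smoothedMean (q : Matrix S S ℝ) (α β : S → ℝ) (f : Matrix S S ℝ) : ℝ :=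
  (α ⬝ᵥ (q ⊙ f) *ᵥ β) / (α ⬝ᵥ q *ᵥ β)

theorem smoothedMean_smul (q : Matrix S S ℝ) (α β : S → ℝ) (f : Matrix S S ℝ) {r s : ℝ}
    (hr : r ≠ 0) (hs : s ≠ 0) : smoothedMean q (r • α) (s • β) f = smoothedMean q α β f := by
  simp only [smoothedMean, mulVec_smul, smul_dotProduct, dotProduct_smul, smul_eq_mul]
  rw [mul_div_mul_left _ _ hs, mul_div_mul_left _ _ hr]

theorem smoothedMean_transpose (q : Matrix S S ℝ) (α β : S → ℝ) (f : Matrix S S ℝ) :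
    smoothedMean q α β f = smoothedMean qᵀ β α fᵀ := by
  rw [smoothedMean, smoothedMean, ← transpose_hadamard, dotProduct_mulVec β, vecMul_transpose,
    dotProduct_mulVec β, vecMul_transpose, dotProduct_comm _ α, dotProduct_comm _ α]

variable {ε C : ℝ} {q f : Matrix S S ℝ} {β : S → ℝ}

theorem mulVec_apply_mem_Icc (hq : ∀ u v, ε ≤ q u v) (hq1 : ∀ u v, q u v ≤ 1)
    (hβ : β ∈ stdSimplex ℝ S) (u : S) : ε ≤ (q *ᵥ β) u ∧ (q *ᵥ β) u ≤ 1 := by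
  simp only [mulVec, dotProduct_comm _ β]
  exact ⟨le_dotProduct_of_mem_stdSimplex hβ (hq u), dotProduct_le_of_mem_stdSimplex hβ (hq1 u)⟩

theorem hadamard_mulVec_apply_mem_Icc (hq : ∀ u v, 0 ≤ q u v) (hf : ∀ u v, 0 ≤ f u v)
    (hfC : ∀ u v, f u v ≤ C) (hβ : β ∈ stdSimplex ℝ S) (u : S) :
    0 ≤ ((q ⊙ f) *ᵥ β) u ∧ ((q ⊙ f) *ᵥ β) u ≤ C * (q *ᵥ β) u := by
  simp only [mulVec, dotProduct, hadamard_apply, mul_sum]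
  have hqβ : ∀ v, 0 ≤ q u v * β v := fun v => mul_nonneg (hq u v) (hβ.1 v)
  refine ⟨sum_nonneg fun v _ => ?_, sum_le_sum fun v _ => ?_⟩
  · rw [mul_right_comm]; exact mul_nonneg (hqβ v) (hf u v)
  · rw [mul_right_comm, mul_comm C]; exact mul_le_mul_of_nonneg_left (hfC u v) (hqβ v)

theorem smoothedMean_mem_Icc (hε : 0 < ε) (hq : ∀ u v, ε ≤ q u v) (hq1 : ∀ u v, q u v ≤ 1)
    (hf : ∀ u v, 0 ≤ f u v) (hfC : ∀ u v, f u v ≤ C) {α : S → ℝ} (hα : α ∈ stdSimplex ℝ S)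
    (hβ : β ∈ stdSimplex ℝ S) : 0 ≤ smoothedMean q α β f ∧ smoothedMean q α β f ≤ C := by
  have hh := hadamard_mulVec_apply_mem_Icc (fun u v => hε.le.trans (hq u v)) hf hfC hβ
  have hZ : 0 < α ⬝ᵥ q *ᵥ β :=
    hε.trans_le (le_dotProduct_of_mem_stdSimplex hα fun u => (mulVec_apply_mem_Icc hq hq1 hβ u).1)
  have hH : α ⬝ᵥ (q ⊙ f) *ᵥ β ≤ C * (α ⬝ᵥ q *ᵥ β) := by
    rw [← smul_eq_mul, ← dotProduct_smul]
    exact sum_le_sum fun u _ => mul_le_mul_of_nonneg_left (hh u).2 (hα.1 u)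
  exact ⟨div_nonneg (le_dotProduct_of_mem_stdSimplex hα fun u => (hh u).1) hZ.le,
    (div_le_iff₀ hZ).2 hH⟩

theorem abs_smoothedMean_sub_le_left (hε : 0 < ε) (hq : ∀ u v, ε ≤ q u v) (hq1 : ∀ u v, q u v ≤ 1)
    (hf : ∀ u v, 0 ≤ f u v) (hfC : ∀ u v, f u v ≤ C) {α₁ α₂ : S → ℝ}
    (hα₁ : α₁ ∈ stdSimplex ℝ S) (hα₂ : α₂ ∈ stdSimplex ℝ S) (hβ : β ∈ stdSimplex ℝ S) :
    |smoothedMean q α₁ β f - smoothedMean q α₂ β f| ≤ C / (2 * ε) * ∑ u, |α₁ u - α₂ u| := by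
  set z := q *ᵥ β
  set h := (q ⊙ f) *ᵥ β
  set J₂ := smoothedMean q α₂ β f
  have hz := mulVec_apply_mem_Icc hq hq1 hβ
  have hh := hadamard_mulVec_apply_mem_Icc (fun u v => hε.le.trans (hq u v)) hf hfC hβ
  have hJ₂ : 0 ≤ J₂ ∧ J₂ ≤ C := smoothedMean_mem_Icc hε hq hq1 hf hfC hα₂ hβ
  have hZ₁ : ε ≤ α₁ ⬝ᵥ z := le_dotProduct_of_mem_stdSimplex hα₁ fun u => (hz u).1
  have hZ₂ : 0 < α₂ ⬝ᵥ z := hε.trans_le (le_dotProduct_of_mem_stdSimplex hα₂ fun u => (hz u).1)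
  have hdiff : smoothedMean q α₁ β f - J₂ = ((α₁ - α₂) ⬝ᵥ (h - J₂ • z)) / (α₁ ⬝ᵥ z) := by
    have hJ₂Z₂ : J₂ * (α₂ ⬝ᵥ z) = α₂ ⬝ᵥ h := div_mul_cancel₀ _ hZ₂.ne'
    rw [sub_dotProduct, dotProduct_sub, dotProduct_sub, dotProduct_smul, dotProduct_smul,
      smul_eq_mul, smul_eq_mul, hJ₂Z₂, sub_self, sub_zero]
    show (α₁ ⬝ᵥ h) / (α₁ ⬝ᵥ z) - J₂ = _
    field_simp [(hε.trans_le hZ₁).ne']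
  -- `h - J₂ z` takes values in `[-J₂, C - J₂]`, an interval of length `C`; since the weights
  -- `α₁ - α₂` sum to zero, only the deviation from its midpoint counts.
  have hcentre : ∀ u, |(h - J₂ • z) u - (C / 2 - J₂)| ≤ C / 2 := fun u => by
    have h1z := sub_nonneg.2 (hz u).2
    rw [Pi.sub_apply, Pi.smul_apply, smul_eq_mul, abs_le]
    constructor
    · nlinarith [(hh u).1, mul_nonneg hJ₂.1 h1z]
    · nlinarith [(hh u).2, mul_nonneg (sub_nonneg.2 hJ₂.2) h1z]
  have hΔ : ∑ u, (α₁ - α₂) u = 0 := by simp [sum_sub_distrib, hα₁.2, hα₂.2]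
  have hC : 0 ≤ C := hJ₂.1.trans hJ₂.2
  rw [hdiff, abs_div, abs_of_pos (hε.trans_le hZ₁), div_le_iff₀ (hε.trans_le hZ₁)]
  calc |(α₁ - α₂) ⬝ᵥ (h - J₂ • z)| ≤ C / 2 * ∑ u, |α₁ u - α₂ u| :=
        abs_dotProduct_le_of_sum_eq_zero hΔ hcentre
    _ = (C / (2 * ε) * ∑ u, |α₁ u - α₂ u|) * ε := by field_simp
    _ ≤ (C / (2 * ε) * ∑ u, |α₁ u - α₂ u|) * (α₁ ⬝ᵥ z) :=
        mul_le_mul_of_nonneg_left hZ₁ (by positivity)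

theorem abs_smoothedMean_sub_le (hε : 0 < ε) (hq : ∀ u v, ε ≤ q u v) (hq1 : ∀ u v, q u v ≤ 1)
    (hf : ∀ u v, 0 ≤ f u v) (hfC : ∀ u v, f u v ≤ C) {α₁ α₂ β₁ β₂ : S → ℝ}
    (hα₁ : α₁ ∈ stdSimplex ℝ S) (hα₂ : α₂ ∈ stdSimplex ℝ S)
    (hβ₁ : β₁ ∈ stdSimplex ℝ S) (hβ₂ : β₂ ∈ stdSimplex ℝ S) :
    |smoothedMean q α₁ β₁ f - smoothedMean q α₂ β₂ f|
      ≤ C / (2 * ε) * (∑ u, |α₁ u - α₂ u| + ∑ v, |β₁ v - β₂ v|) := by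
  have hβ : |smoothedMean q α₂ β₁ f - smoothedMean q α₂ β₂ f|
      ≤ C / (2 * ε) * ∑ v, |β₁ v - β₂ v| := by
    rw [smoothedMean_transpose q α₂, smoothedMean_transpose q α₂]
    exact abs_smoothedMean_sub_le_left hε (fun u v => hq v u) (fun u v => hq1 v u)
      (fun u v => hf v u) (fun u v => hfC v u) hβ₁ hβ₂ hα₂
  rw [mul_add]
  exact (abs_sub_le _ _ _).trans
    (add_le_add (abs_smoothedMean_sub_le_left hε hq hq1 hf hfC hα₁ hα₂ hβ₁) hβ)
end SmoothedMean

theorem prod_update_hadamard {S : Type*} {n m : ℕ} (hm : m < n) (M : ℕ → Matrix S S ℝ)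
    (F : Matrix S S ℝ) (p : Fin (n + 1) → S) :
    ∏ u : Fin n, Function.update M m (M m ⊙ F) u (p u.castSucc) (p u.succ)
      = (∏ u : Fin n, M u (p u.castSucc) (p u.succ))
          * F (p ⟨m, by omega⟩) (p ⟨m + 1, by omega⟩) := by
  have factor : ∀ u : Fin n, Function.update M m (M m ⊙ F) u (p u.castSucc) (p u.succ)
      = M u (p u.castSucc) (p u.succ) * if u = ⟨m, hm⟩ then F (p u.castSucc) (p u.succ) else 1 := by
    intro u
    by_cases hu : u = ⟨m, hm⟩
    · subst hu; simp
    · rw [Function.update_of_ne (fun h => hu (Fin.ext h)), if_neg hu, mul_one]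
  simp only [factor, prod_mul_distrib, prod_ite_eq', mem_univ, if_true]
  rfl

section PathSums
variable {S : Type*} [Fintype S] [DecidableEq S]

theorem sum_path_prod_eq_list_prod (n : ℕ) (M : ℕ → Matrix S S ℝ) (a b : S) :
    (∑ p : Fin (n + 1) → S,
      if p 0 = a ∧ p (Fin.last n) = b then ∏ u : Fin n, M u (p u.castSucc) (p u.succ) else 0)
      = ((List.range n).map M).prod a b := by
  induction n generalizing M a with
  | zero =>
    rw [← (Equiv.funUnique (Fin 1) S).symm.sum_comp]
    simp [uniqueElim_const, ite_and, Matrix.one_apply]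
  | succ n ih =>
    rw [← (Fin.consEquiv fun _ => S).sum_comp, Fintype.sum_prod_type]
    simp only [Fin.consEquiv_apply, Fin.cons_zero, ← Fin.succ_last, Fin.cons_succ,
      Fin.prod_univ_succ, Fin.castSucc_zero, ← Fin.succ_castSucc, Fin.val_zero, Fin.val_succ]
    rw [List.range_succ_eq_map, List.map_cons, List.prod_cons, List.map_map, Matrix.mul_apply]
    simp only [← ih (M ∘ Nat.succ), Finset.mul_sum, ite_and, mul_ite, mul_zero]
    conv_rhs => rw [Finset.sum_comm]
    simp [Finset.sum_ite_eq]

theorem list_prod_range_split (M : ℕ → Matrix S S ℝ) (m k : ℕ) :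
    ((List.range (m + 1 + k)).map M).prod
      = ((List.range m).map M).prod * M m * ((List.range k).map fun i => M (m + 1 + i)).prod := by
  rw [List.range_add, List.range_succ, List.map_append, List.map_append, List.map_map]
  simp [List.prod_append, Function.comp_def, mul_assoc]

theorem mul_diagonal_hadamard (q F : Matrix S S ℝ) (c : S → ℝ) :
    (q * diagonal c) ⊙ F = (q ⊙ F) * diagonal c := by
  ext u v
  simp only [hadamard_apply, mul_diagonal]
  ring

end PathSums

section HMM
variable {S Y : Type*} [Fintype S] [DecidableEq S]

noncomputable def obsKernel (q : Matrix S S ℝ) (g : S → Y → ℝ) (y : ℕ → Y) (r : ℕ) :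
    Matrix S S ℝ :=
  q * diagonal fun x => g x (y r)

/-- Row `a` is the unnormalized filter at time `m` started from `X_0 = a`. -/
noncomputable def hmmForward (q : Matrix S S ℝ) (g : S → Y → ℝ) (y : ℕ → Y) (m : ℕ) :
    Matrix S S ℝ :=
  ((List.range m).map fun r => obsKernel q g y (r + 1)).prod

/-- Column `b` is the backward function at time `m + 1` for `X_{m+1+k} = b`, with the observation
factor of time `m + 1` included, so that the middle matrix of the Bayes formula is `q` itself. -/
noncomputable def hmmBackward (q : Matrix S S ℝ) (g : S → Y → ℝ) (y : ℕ → Y) (m k : ℕ) :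
    Matrix S S ℝ :=
  diagonal (fun x => g x (y (m + 1))) *
    ((List.range k).map fun i => obsKernel q g y (m + 1 + i + 1)).prod

theorem hmmPathWeight_eq_prod (q : Matrix S S ℝ) (g : S → Y → ℝ) (y : ℕ → Y) (n : ℕ)
    (p : Fin (n + 1) → S) :
    hmmPathWeight q g y n p = ∏ u : Fin n, obsKernel q g y (u + 1) (p u.castSucc) (p u.succ) := by
  simp [hmmPathWeight, obsKernel, mul_diagonal]

theorem hmmCondExp_eq_smoothedMean (q : Matrix S S ℝ) (g : S → Y → ℝ) (y : ℕ → Y)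
    (f : Matrix S S ℝ) (m k : ℕ) (h1 : 1 ≤ m + 1) (h2 : m + 1 ≤ m + 1 + k) (a b : S) :
    hmmCondExp q g y f (m + 1 + k) (m + 1) h1 h2 a b
      = smoothedMean q (hmmForward q g y m a) ((hmmBackward q g y m k)ᵀ b) f := by
  set M : ℕ → Matrix S S ℝ := fun r => obsKernel q g y (r + 1)
  have hden : ((List.range (m + 1 + k)).map M).prod
      = hmmForward q g y m * q * hmmBackward q g y m k := by
    rw [list_prod_range_split]
    simp only [hmmForward, hmmBackward, M, obsKernel, Matrix.mul_assoc]
  have hnum : ((List.range (m + 1 + k)).map (Function.update M m (M m ⊙ f))).prod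
      = hmmForward q g y m * (q ⊙ f) * hmmBackward q g y m k := by
    rw [list_prod_range_split, Function.update_self]
    have hA : (List.range m).map (Function.update M m (M m ⊙ f)) = (List.range m).map M :=
      List.map_congr_left fun r hr => Function.update_of_ne (List.mem_range.1 hr).ne _ _
    have hB : (List.range k).map (fun i => Function.update M m (M m ⊙ f) (m + 1 + i))
        = (List.range k).map (fun i => M (m + 1 + i)) :=
      List.map_congr_left fun i _ => Function.update_of_ne (by omega) _ _
    rw [hA, hB]
    simp only [hmmForward, hmmBackward, M, obsKernel, mul_diagonal_hadamard, Matrix.mul_assoc]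
  have hweight : ∀ p : Fin (m + 1 + k + 1) → S,
      hmmPathWeight q g y (m + 1 + k) p * f (p ⟨m + 1 - 1, by omega⟩) (p ⟨m + 1, by omega⟩)
        = ∏ u : Fin (m + 1 + k), Function.update M m (M m ⊙ f) u (p u.castSucc) (p u.succ) := by
    intro p
    rw [prod_update_hadamard (by omega), hmmPathWeight_eq_prod]
    rfl
  unfold hmmCondExp
  rw [smoothedMean, ← mul_mul_apply, ← mul_mul_apply, ← hnum, ← hden,
    ← sum_path_prod_eq_list_prod, ← sum_path_prod_eq_list_prod]
  simp only [hweight]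
  simp only [hmmPathWeight_eq_prod]
  rfl

theorem transpose_hmmBackward (q : Matrix S S ℝ) (g : S → Y → ℝ) (y : ℕ → Y) (m k : ℕ) :
    (hmmBackward q g y m k)ᵀ
      = (((List.range k).map fun i => obsKernel q g y (m + 1 + i + 1)).map transpose).reverse.prod
        * diagonal fun x => g x (y (m + 1)) := by
  rw [hmmBackward, transpose_mul, transpose_list_prod, diagonal_transpose]

variable {ε : ℝ} {q : Matrix S S ℝ} {g : S → Y → ℝ}

theorem isMixing_obsKernel (hq : ∀ u v, ε ≤ q u v) (hq1 : ∀ u v, q u v ≤ 1)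
    (hg : ∀ x yy, 0 < g x yy) (y : ℕ → Y) (r : ℕ) : IsMixing ε (obsKernel q g y r) :=
  (isMixing_of_le hq hq1).mul_diagonal fun x => hg x (y r)

theorem forall_mem_hmmForward_factors_isMixing (hq : ∀ u v, ε ≤ q u v) (hq1 : ∀ u v, q u v ≤ 1)
    (hg : ∀ x yy, 0 < g x yy) (y : ℕ → Y) (m : ℕ) :
    ∀ M ∈ (List.range m).map fun r => obsKernel q g y (r + 1), IsMixing ε M := by
  simp only [List.mem_map]
  rintro _ ⟨r, -, rfl⟩
  exact isMixing_obsKernel hq hq1 hg y _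

theorem forall_mem_hmmBackward_factors_isMixing (hq : ∀ u v, ε ≤ q u v) (hq1 : ∀ u v, q u v ≤ 1)
    (hg : ∀ x yy, 0 < g x yy) (y : ℕ → Y) (m k : ℕ) :
    ∀ M ∈ (((List.range k).map fun i => obsKernel q g y (m + 1 + i + 1)).map transpose).reverse,
      IsMixing ε M := by
  simp only [List.mem_reverse, List.map_map, List.mem_map]
  rintro _ ⟨i, -, rfl⟩
  exact (isMixing_obsKernel hq hq1 hg y _).transpose

theorem rowPositive_hmmForward (hε : 0 < ε) (hq : ∀ u v, ε ≤ q u v) (hq1 : ∀ u v, q u v ≤ 1)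
    (hg : ∀ x yy, 0 < g x yy) (y : ℕ → Y) (m : ℕ) : RowPositive (hmmForward q g y m) := by
  simpa [hmmForward] using
    RowPositive.list_prod_mul hε (forall_mem_hmmForward_factors_isMixing hq hq1 hg y m)
      rowPositive_one

theorem rowPositive_transpose_hmmBackward (hε : 0 < ε) (hq : ∀ u v, ε ≤ q u v)
    (hq1 : ∀ u v, q u v ≤ 1) (hg : ∀ x yy, 0 < g x yy) (y : ℕ → Y) (m k : ℕ) :
    RowPositive (hmmBackward q g y m k)ᵀ := by
  rw [transpose_hmmBackward]
  exact RowPositive.list_prod_mul hε (forall_mem_hmmBackward_factors_isMixing hq hq1 hg y m k)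
    (rowPositive_diagonal fun x => hg x _)

theorem hmmCondExp_eq_smoothedMean_rowNormalize (hε : 0 < ε) (hq : ∀ u v, ε ≤ q u v)
    (hq1 : ∀ u v, q u v ≤ 1) (hg : ∀ x yy, 0 < g x yy) (y : ℕ → Y) (f : Matrix S S ℝ) (m k : ℕ)
    (h1 : 1 ≤ m + 1) (h2 : m + 1 ≤ m + 1 + k) (a b : S) :
    hmmCondExp q g y f (m + 1 + k) (m + 1) h1 h2 a b
      = smoothedMean q (rowNormalize (hmmForward q g y m) a)
          (rowNormalize (hmmBackward q g y m k)ᵀ b) f := by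
  rw [hmmCondExp_eq_smoothedMean, rowNormalize_apply_eq_smul, rowNormalize_apply_eq_smul,
    smoothedMean_smul _ _ _ _ (inv_ne_zero ((rowPositive_hmmForward hε hq hq1 hg y m).2 a).ne')
      (inv_ne_zero ((rowPositive_transpose_hmmBackward hε hq hq1 hg y m k).2 b).ne')]

variable [Nonempty S]

theorem sum_abs_rowNormalize_hmmForward_sub_le (hε : 0 < ε) (hq : ∀ u v, ε ≤ q u v)
    (hq1 : ∀ u v, q u v ≤ 1) (hg : ∀ x yy, 0 < g x yy) (y : ℕ → Y) (m : ℕ) (a a' : S) :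
    ∑ u, |rowNormalize (hmmForward q g y m) a u - rowNormalize (hmmForward q g y m) a' u|
      ≤ 2 * (1 - ε) ^ m := by
  have hε1 : ε ≤ 1 := (hq (Classical.arbitrary S) (Classical.arbitrary S)).trans (hq1 _ _)
  simpa [hmmForward] using sum_abs_rowNormalize_sub_le hε hε1
    (forall_mem_hmmForward_factors_isMixing hq hq1 hg y m) rowPositive_one a a'

theorem sum_abs_rowNormalize_transpose_hmmBackward_sub_le (hε : 0 < ε) (hq : ∀ u v, ε ≤ q u v)
    (hq1 : ∀ u v, q u v ≤ 1) (hg : ∀ x yy, 0 < g x yy) (y : ℕ → Y) (m k : ℕ) (b b' : S) :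
    ∑ v, |rowNormalize (hmmBackward q g y m k)ᵀ b v - rowNormalize (hmmBackward q g y m k)ᵀ b' v|
      ≤ 2 * (1 - ε) ^ k := by
  have hε1 : ε ≤ 1 := (hq (Classical.arbitrary S) (Classical.arbitrary S)).trans (hq1 _ _)
  simpa [transpose_hmmBackward] using sum_abs_rowNormalize_sub_le hε hε1
    (forall_mem_hmmBackward_factors_isMixing hq hq1 hg y m k) (rowPositive_diagonal fun x => hg x _)
    b b'

theorem abs_hmmCondExp_sub_le {C : ℝ} {f : Matrix S S ℝ}
    (hε : 0 < ε) (hq : ∀ u v, ε ≤ q u v) (hq1 : ∀ u v, q u v ≤ 1) (hg : ∀ x yy, 0 < g x yy)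
    (hf : ∀ u v, 0 ≤ f u v) (hfC : ∀ u v, f u v ≤ C) (y : ℕ → Y) (m k : ℕ) (h1 : 1 ≤ m + 1)
    (h2 : m + 1 ≤ m + 1 + k) (a b a' b' : S) :
    |hmmCondExp q g y f (m + 1 + k) (m + 1) h1 h2 a b
        - hmmCondExp q g y f (m + 1 + k) (m + 1) h1 h2 a' b'|
      ≤ C / ε * ((1 - ε) ^ m + (1 - ε) ^ k) := by
  have hA := rowPositive_hmmForward hε hq hq1 hg y m
  have hB := rowPositive_transpose_hmmBackward hε hq hq1 hg y m k
  have hC : 0 ≤ C := (hf (Classical.arbitrary S) (Classical.arbitrary S)).trans (hfC _ _)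
  rw [hmmCondExp_eq_smoothedMean_rowNormalize hε hq hq1 hg,
    hmmCondExp_eq_smoothedMean_rowNormalize hε hq hq1 hg]
  calc _ ≤ C / (2 * ε) * (2 * (1 - ε) ^ m + 2 * (1 - ε) ^ k) :=
        (abs_smoothedMean_sub_le hε hq hq1 hf hfC (hA.rowNormalize_mem_stdSimplex a)
          (hA.rowNormalize_mem_stdSimplex a') (hB.rowNormalize_mem_stdSimplex b)
          (hB.rowNormalize_mem_stdSimplex b')).trans
        (mul_le_mul_of_nonneg_left (add_le_add
          (sum_abs_rowNormalize_hmmForward_sub_le hε hq hq1 hg y m a a')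
          (sum_abs_rowNormalize_transpose_hmmBackward_sub_le hε hq hq1 hg y m k b b'))
          (by positivity))
    _ = C / ε * ((1 - ε) ^ m + (1 - ε) ^ k) := by field_simp

end HMM

/-- Two-sided forgetting bound for conditional expectations given both endpoints. -/
theorem stmt14 {S Y : Type*} [Fintype S] [DecidableEq S] [Nonempty S]
    (q : S → S → ℝ) (g : S → Y → ℝ) (y : ℕ → Y) (ε : ℝ) (hε : 0 < ε)
    (hq : ∀ x x', ε ≤ q x x') (hqs : ∀ x, ∑ x', q x x' = 1)
    (hg : ∀ x yy, 0 < g x yy)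
    (f : S → S → ℝ) (C : ℝ) (hf : ∀ a b, 0 < f a b) (hfC : ∀ a b, f a b ≤ C)
    (μ₁ μ₂ : S × S → ℝ)
    (hμ₁ : ∀ p, 0 ≤ μ₁ p) (hμ₁s : ∑ p, μ₁ p = 1)
    (hμ₂ : ∀ p, 0 ≤ μ₂ p) (hμ₂s : ∑ p, μ₂ p = 1)
    (n t : ℕ) (h1 : 1 ≤ t) (h2 : t ≤ n) :
    |(∑ p : S × S, hmmCondExp q g y f n t h1 h2 p.1 p.2 * μ₁ p) -
        ∑ p : S × S, hmmCondExp q g y f n t h1 h2 p.1 p.2 * μ₂ p|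
      ≤ (C / ε) * ((1 - ε) ^ (t - 1) + (1 - ε) ^ (n - t)) := by
  obtain ⟨m, rfl⟩ : ∃ m, t = m + 1 := ⟨t - 1, by omega⟩
  obtain ⟨k, rfl⟩ : ∃ k, n = m + 1 + k := ⟨n - (m + 1), by omega⟩
  have hq1 : ∀ u v, q u v ≤ 1 := fun u v =>
    (single_le_sum (fun w _ => hε.le.trans (hq u w)) (mem_univ v)).trans_eq (hqs u)
  rw [Nat.add_sub_cancel, Nat.add_sub_cancel_left]
  exact abs_sum_mul_sub_sum_mul_le ⟨hμ₁, hμ₁s⟩ ⟨hμ₂, hμ₂s⟩ fun p p' =>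
    abs_hmmCondExp_sub_le hε hq hq1 hg (fun u v => (hf u v).le) hfC y m k h1 h2 p.1 p.2 p'.1 p'.2
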